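/- arXiv:1901.08159 — 3 statements merged into one kernel-verified Lean document; each statement's English description precedes it below -/
import Mathlib

section
/- For all real numbers μ and γ with 0 < μ ≤ 1/2 and 0 ≤ γ ≤ 1, it holds that 1 + 1/(μ + γ) ≤ 2/(μ·(1 + γ)). -/
/-- Key inequality in the Banditron-MÊLÉE mistake-bound proof, replacing the
original Banditron bound `1 + 1/μ ≤ 2/μ`: for an exploration probability
`μ ∈ (0, 1/2]` and an edge `γ ∈ [0, 1]`, `1 + 1/(μ + γ) ≤ 2/(μ·(1 + γ))`. -/
theorem banditron_melee_key_inequality (μ γ : ℝ)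
    (hμ0 : 0 < μ) (hμ : μ ≤ 1 / 2) (hγ0 : 0 ≤ γ) (hγ1 : γ ≤ 1) :
    1 + 1 / (μ + γ) ≤ 2 / (μ * (1 + γ)) := by
  have h1 : 0 < μ + γ := by linarith
  have h2 : 0 < μ * (1 + γ) := by positivity
  rw [show (1:ℝ) + 1/(μ+γ) = (μ+γ+1)/(μ+γ) by field_simp, div_le_div_iff₀ h1 h2]
  nlinarith [mul_nonneg hγ0 hγ0, mul_nonneg hγ0 hμ0.le, sq_nonneg (μ - γ), sq_nonneg (1 - γ), mul_nonneg (mul_nonneg hγ0 hγ0) hμ0.le]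
end

section
/- Let A be a finite type, let Q : A → ℝ satisfy Q(a) > 0 for all a and ∑_{a} Q(a) = 1, let a*, â ∈ A, let D be a natural number, and let x ∈ ℝ^D with x ≠ 0. For b ∈ A define Ũ(b) ∈ ℝ^{A × D} by Ũ(b)_{a,j} = x_j · ([a* = b]·[a = b]/Q(b) − [a = â]), and let ‖·‖_F denote the Frobenius norm. Then ∑_{b ∈ A} Q(b) · ‖Ũ(b)‖_F² = ‖x‖² · (1/Q(a*) + 1) if â ≠ a*, and ∑_{b ∈ A} Q(b) · ‖Ũ(b)‖_F² = ‖x‖² · (1/Q(a*) − 1) if â = a*. In particular, ∑_{b ∈ A} Q(b) · ‖Ũ(b)‖_F² ≤ ‖x‖² · (1 + 1/Q(a*)). -/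
/-! Ũ(b) is the rank-one matrix `u_b xᵀ` with `u_b = c_b e_b - e_â` and the importance weight
`c_b = [a* = b] / Q(b)`, so `‖Ũ(b)‖_F² = ‖x‖² (c_b² - 2 c_b [b = â] + 1)`. Averaging over `b ∼ Q`,
only `b = a*` contributes to the first two terms, giving `‖x‖² (1/Q(a*) - 2 [â = a*] + 1)`. -/

open Finset

theorem sum_sum_mul_sq {ι κ R : Type*} [Fintype ι] [Fintype κ] [CommSemiring R]
    (u : ι → R) (x : κ → R) :
    ∑ a, ∑ j, (x j * u a) ^ 2 = (∑ j, x j ^ 2) * ∑ a, u a ^ 2 := by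
  simp_rw [mul_pow, ← sum_mul, ← mul_sum]

theorem sum_sq_mul_ite_sub_ite {ι R : Type*} [Fintype ι] [DecidableEq ι] [CommRing R]
    (c : R) (b i : ι) :
    ∑ a, (c * (if a = b then 1 else 0) - if a = i then 1 else 0) ^ 2 =
      c ^ 2 - 2 * c * (if b = i then 1 else 0) + 1 := by
  have pointwise : ∀ a, (c * (if a = b then 1 else 0) - if a = i then (1 : R) else 0) ^ 2 =
      (if a = b then c ^ 2 - 2 * c * (if b = i then 1 else 0) else 0) +
        if a = i then 1 else 0 := by
    intro a
    split_ifs <;> simp_all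
    ring
  rw [sum_congr rfl fun a _ => pointwise a, sum_add_distrib]
  simp

theorem sum_mul_sq_importance_weight {ι : Type*} [Fintype ι] [DecidableEq ι] (Q : ι → ℝ)
    (hQsum : ∑ b, Q b = 1) (i₀ i : ι) (hQ : Q i₀ ≠ 0) :
    ∑ b, Q b * (((if i₀ = b then 1 else 0) / Q b) ^ 2 -
        2 * ((if i₀ = b then 1 else 0) / Q b) * (if b = i then 1 else 0) + 1) =
      1 / Q i₀ + 1 - 2 * (if i = i₀ then 1 else 0) := by
  have pointwise : ∀ b, Q b * (((if i₀ = b then 1 else 0) / Q b) ^ 2 -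
        2 * ((if i₀ = b then 1 else 0) / Q b) * (if b = i then 1 else 0) + 1) =
      (if b = i₀ then 1 / Q i₀ - 2 * (if i = i₀ then 1 else 0) else 0) + Q b := by
    intro b
    by_cases hb : b = i₀
    · subst hb
      rcases eq_or_ne i b with rfl | hi
      · simp only [↓reduceIte]
        field_simp
      · simp only [↓reduceIte, if_neg hi, if_neg hi.symm]
        field_simp
    · simp [hb, Ne.symm hb]
  rw [sum_congr rfl fun b _ => pointwise b, sum_add_distrib, sum_ite_eq', hQsum]
  simp only [mem_univ, if_true]
  ring

theorem banditron_second_moment_eq {A : Type*} [Fintype A] [DecidableEq A]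
    (Q : A → ℝ) (hQsum : ∑ a, Q a = 1) (astar ahat : A) (hQ : Q astar ≠ 0)
    {κ : Type*} [Fintype κ] (x : κ → ℝ) :
    ∑ b, Q b *
        (∑ a, ∑ j,
          (x j * ((if astar = b then (1 : ℝ) else 0) * (if a = b then 1 else 0) / Q b
            - (if a = ahat then 1 else 0))) ^ 2) =
      (∑ j, x j ^ 2) * (1 / Q astar + 1 - 2 * (if ahat = astar then 1 else 0)) := by
  simp_rw [mul_div_right_comm, sum_sum_mul_sq, sum_sq_mul_ite_sub_ite, mul_left_comm (Q _),
    ← mul_sum]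
  rw [sum_mul_sq_importance_weight Q hQsum astar ahat hQ]

theorem banditron_update_second_moment_general {A : Type*} [Fintype A] [DecidableEq A]
    (Q : A → ℝ) (hQpos : ∀ a, 0 < Q a) (hQsum : ∑ a : A, Q a = 1)
    (astar ahat : A) (D : ℕ) (x : Fin D → ℝ) :
    (ahat ≠ astar →
      ∑ b : A, Q b *
          (∑ a : A, ∑ j : Fin D,
            (x j * ((if astar = b then (1 : ℝ) else 0) * (if a = b then 1 else 0) / Q b
              - (if a = ahat then 1 else 0))) ^ 2) =
        (∑ j : Fin D, x j ^ 2) * (1 / Q astar + 1)) ∧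
    (ahat = astar →
      ∑ b : A, Q b *
          (∑ a : A, ∑ j : Fin D,
            (x j * ((if astar = b then (1 : ℝ) else 0) * (if a = b then 1 else 0) / Q b
              - (if a = ahat then 1 else 0))) ^ 2) =
        (∑ j : Fin D, x j ^ 2) * (1 / Q astar - 1)) ∧
    ∑ b : A, Q b *
        (∑ a : A, ∑ j : Fin D,
          (x j * ((if astar = b then (1 : ℝ) else 0) * (if a = b then 1 else 0) / Q b
            - (if a = ahat then 1 else 0))) ^ 2) ≤
      (∑ j : Fin D, x j ^ 2) * (1 + 1 / Q astar) := by
  rw [banditron_second_moment_eq Q hQsum astar ahat (hQpos astar).ne' x]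
  have hx : 0 ≤ ∑ j : Fin D, x j ^ 2 := sum_nonneg fun j _ => sq_nonneg (x j)
  refine ⟨fun h => by rw [if_neg h]; ring, fun h => by rw [if_pos h]; ring, ?_⟩
  gcongr
  split_ifs <;> linarith

/-- Exact second moment of the Banditron update matrix
`Ũ(b)_{a,j} = x_j·([a* = b]·[a = b]/Q(b) − [a = â])` under `b ∼ Q`
(Frobenius norm squared written out as the sum of squared entries, and
`‖x‖²` as `∑ j, x j ^ 2`):
it equals `‖x‖²·(1/Q(a*) + 1)` if `â ≠ a*`, and `‖x‖²·(1/Q(a*) − 1)` if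
`â = a*`; in particular it is at most `‖x‖²·(1 + 1/Q(a*))`. -/
theorem banditron_update_second_moment {A : Type*} [Fintype A] [DecidableEq A]
    (Q : A → ℝ) (hQpos : ∀ a, 0 < Q a) (hQsum : ∑ a : A, Q a = 1)
    (astar ahat : A) (D : ℕ) (x : Fin D → ℝ) (hx : x ≠ 0) :
    (ahat ≠ astar →
      ∑ b : A, Q b *
          (∑ a : A, ∑ j : Fin D,
            (x j * ((if astar = b then (1 : ℝ) else 0) * (if a = b then 1 else 0) / Q b
              - (if a = ahat then 1 else 0))) ^ 2) =
        (∑ j : Fin D, x j ^ 2) * (1 / Q astar + 1)) ∧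
    (ahat = astar →
      ∑ b : A, Q b *
          (∑ a : A, ∑ j : Fin D,
            (x j * ((if astar = b then (1 : ℝ) else 0) * (if a = b then 1 else 0) / Q b
              - (if a = ahat then 1 else 0))) ^ 2) =
        (∑ j : Fin D, x j ^ 2) * (1 / Q astar - 1)) ∧
    ∑ b : A, Q b *
        (∑ a : A, ∑ j : Fin D,
          (x j * ((if astar = b then (1 : ℝ) else 0) * (if a = b then 1 else 0) / Q b
            - (if a = ahat then 1 else 0))) ^ 2) ≤
      (∑ j : Fin D, x j ^ 2) * (1 + 1 / Q astar) :=
  banditron_update_second_moment_general Q hQpos hQsum astar ahat D x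
end

section
/- Let A be a finite type, let Q : A → ℝ satisfy Q(a) > 0 for all a and ∑_{a} Q(a) = 1, let a*, â ∈ A, let x ∈ ℝ^D, and let μ, γ be real numbers with 0 < μ ≤ 1/2, 0 ≤ γ ≤ 1, and Q(a*) ≥ μ + γ. For b ∈ A define Ũ(b) ∈ ℝ^{A × D} by Ũ(b)_{a,j} = x_j · ([a* = b]·[a = b]/Q(b) − [a = â]). Then ∑_{b ∈ A} Q(b) · ‖Ũ(b)‖_F² ≤ 2·‖x‖² / (μ·(1 + γ)). -/
/-- Combined second-moment bound for the Banditron-MÊLÉE update: if the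
exploration distribution `Q` places probability at least `μ + γ` on the correct
action `a*`, with `0 < μ ≤ 1/2` and `0 ≤ γ ≤ 1`, then the expected squared
Frobenius norm of the Banditron update matrix
`Ũ(b)_{a,j} = x_j·([a* = b]·[a = b]/Q(b) − [a = â])` is at most
`2·‖x‖²/(μ·(1 + γ))`. -/
theorem banditron_melee_second_moment_bound {A : Type*} [Fintype A] [DecidableEq A]
    (Q : A → ℝ) (hQpos : ∀ a, 0 < Q a) (hQsum : ∑ a : A, Q a = 1)
    (astar ahat : A) (D : ℕ) (x : Fin D → ℝ)
    (μ γ : ℝ) (hμ0 : 0 < μ) (hμ : μ ≤ 1 / 2) (hγ0 : 0 ≤ γ) (hγ1 : γ ≤ 1)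
    (hQstar : μ + γ ≤ Q astar) :
    ∑ b : A, Q b *
        (∑ a : A, ∑ j : Fin D,
          (x j * ((if astar = b then (1 : ℝ) else 0) * (if a = b then 1 else 0) / Q b
            - (if a = ahat then 1 else 0))) ^ 2) ≤
      2 * (∑ j : Fin D, x j ^ 2) / (μ * (1 + γ)) := by
  set X := ∑ j : Fin D, x j ^ 2 with hXdef
  have hXnn : 0 ≤ X := Finset.sum_nonneg fun j _ => sq_nonneg _
  set g : A → ℝ := fun b =>
    if astar = b then (if ahat = b then (1 / Q b - 1) ^ 2 else 1 / (Q b) ^ 2 + 1) else 1 with hg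
  have key : ∀ b : A,
      (∑ a : A, ∑ j : Fin D,
        (x j * ((if astar = b then (1 : ℝ) else 0) * (if a = b then 1 else 0) / Q b
          - (if a = ahat then 1 else 0))) ^ 2) = X * g b := by
    intro b
    have step1 : ∀ a : A, (∑ j : Fin D,
        (x j * ((if astar = b then (1 : ℝ) else 0) * (if a = b then 1 else 0) / Q b
          - (if a = ahat then 1 else 0))) ^ 2)
        = X * ((if astar = b then (1 : ℝ) else 0) * (if a = b then 1 else 0) / Q b
          - (if a = ahat then 1 else 0)) ^ 2 := by
      intro a
      rw [hXdef, Finset.sum_mul]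
      exact Finset.sum_congr rfl fun j _ => by ring
    rw [Finset.sum_congr rfl fun a _ => step1 a, ← Finset.mul_sum]
    congr 1
    by_cases h1 : astar = b
    · by_cases h2 : ahat = b
      · have this1 : ∀ a : A, ((if astar = b then (1 : ℝ) else 0) * (if a = b then 1 else 0) / Q b
            - (if a = ahat then 1 else 0)) ^ 2
            = if a = b then (1 / Q b - 1) ^ 2 else 0 := by
          intro a
          by_cases h3 : a = b
          · have h4 : a = ahat := h3.trans h2.symm
            simp only [if_pos h1, if_pos h3, if_pos h4]; ring
          · have h4 : ¬ a = ahat := fun h => h3 (h.trans h2)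
            simp only [if_pos h1, if_neg h3, if_neg h4]; ring
        rw [Finset.sum_congr rfl fun a _ => this1 a, Finset.sum_ite_eq' Finset.univ b
          (fun _ => (1 / Q b - 1) ^ 2), if_pos (Finset.mem_univ b), hg]
        simp only [if_pos h1, if_pos h2]
      · have this1 : ∀ a : A, ((if astar = b then (1 : ℝ) else 0) * (if a = b then 1 else 0) / Q b
            - (if a = ahat then 1 else 0)) ^ 2
            = (if a = b then 1 / (Q b) ^ 2 else 0) + (if a = ahat then 1 else 0) := by
          intro a
          by_cases h3 : a = b
          · have h4 : ¬ a = ahat := fun h => h2 (h ▸ h3)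
            simp only [if_pos h1, if_pos h3, if_neg h4]; ring
          · by_cases h4 : a = ahat
            · simp only [if_pos h1, if_neg h3, if_pos h4]; ring
            · simp only [if_pos h1, if_neg h3, if_neg h4]; ring
        rw [Finset.sum_congr rfl fun a _ => this1 a, Finset.sum_add_distrib,
          Finset.sum_ite_eq' Finset.univ b (fun _ => 1 / (Q b) ^ 2),
          Finset.sum_ite_eq' Finset.univ ahat (fun _ => (1 : ℝ)),
          if_pos (Finset.mem_univ b), if_pos (Finset.mem_univ ahat), hg]
        simp only [if_pos h1, if_neg h2]
    · have this1 : ∀ a : A, ((if astar = b then (1 : ℝ) else 0) * (if a = b then 1 else 0) / Q b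
          - (if a = ahat then 1 else 0)) ^ 2 = if a = ahat then 1 else 0 := by
        intro a
        by_cases h4 : a = ahat
        · simp only [if_neg h1, if_pos h4]; ring
        · simp only [if_neg h1, if_neg h4]; ring
      rw [Finset.sum_congr rfl fun a _ => this1 a, Finset.sum_ite_eq' Finset.univ ahat
        (fun _ => (1 : ℝ)), if_pos (Finset.mem_univ ahat), hg]
      simp only [if_neg h1]
  calc ∑ b : A, Q b *
        (∑ a : A, ∑ j : Fin D,
          (x j * ((if astar = b then (1 : ℝ) else 0) * (if a = b then 1 else 0) / Q b
            - (if a = ahat then 1 else 0))) ^ 2)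
      = X * ∑ b : A, Q b * g b := by
        rw [Finset.mul_sum]
        exact Finset.sum_congr rfl fun b _ => by rw [key b]; ring
    _ ≤ X * (2 / (μ * (1 + γ))) := by
        apply mul_le_mul_of_nonneg_left _ hXnn
        have hd : 0 < μ * (1 + γ) := by positivity
        set q := Q astar with hqdef
        have hq0 : 0 < q := hQpos astar
        have hq0' : q ≠ 0 := hq0.ne'
        have hq1 : q ≤ 1 := by
          have := Finset.single_le_sum (f := Q) (fun a _ => (hQpos a).le) (Finset.mem_univ astar)
          linarith [hQsum ▸ this]
        have hrest : ∑ b ∈ Finset.univ.erase astar, Q b = 1 - q := by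
          have := Finset.add_sum_erase Finset.univ Q (Finset.mem_univ astar)
          linarith [hQsum ▸ this]
        have hsplit : ∑ b : A, Q b * g b = q * g astar + (1 - q) := by
          rw [← Finset.add_sum_erase Finset.univ (fun b => Q b * g b) (Finset.mem_univ astar),
            ← hrest]
          congr 1
          refine Finset.sum_congr rfl fun b hb => ?_
          have hb' : astar ≠ b := fun h => (Finset.mem_erase.mp hb).1 h.symm
          simp [hg, hb']
        rw [hsplit]
        have hμγ : μ * (1 + γ) ≤ 1 := by
          nlinarith [mul_nonneg (sub_nonneg.2 hμ) hγ0]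
        by_cases h2 : ahat = astar
        · have hga : g astar = (1 / q - 1) ^ 2 := by simp [hg, h2, hqdef]
          rw [hga, le_div_iff₀ hd]
          have e1 : (q * (1 / q - 1) ^ 2 + (1 - q)) * (μ * (1 + γ))
              = ((1 - q) * (μ * (1 + γ))) / q := by field_simp; ring
          rw [e1, div_le_iff₀ hq0]
          nlinarith [mul_pos hq0 hd, mul_nonneg (sub_nonneg.2 (show μ ≤ 1 by linarith)) hγ0]
        · have hga : g astar = 1 / q ^ 2 + 1 := by simp [hg, h2, hqdef]
          rw [hga, le_div_iff₀ hd]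
          have e1 : (q * (1 / q ^ 2 + 1) + (1 - q)) * (μ * (1 + γ))
              = (μ * (1 + γ) * (1 + q)) / q := by field_simp; ring
          rw [e1, div_le_iff₀ hq0]
          have hE : μ * (1 + γ) * (1 + (μ + γ)) ≤ 2 * (μ + γ) := by
            nlinarith [mul_nonneg (sub_nonneg.2 hμ) hγ0,
              mul_nonneg (mul_nonneg (sub_nonneg.2 hμ) hγ0) hγ0,
              mul_nonneg (sub_nonneg.2 hμ) hμ0.le,
              mul_nonneg (mul_nonneg (sub_nonneg.2 hμ) hμ0.le) hγ0,
              mul_nonneg (mul_nonneg hμ0.le hγ0) (sub_nonneg.2 hγ1),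
              mul_nonneg (sub_nonneg.2 hμ) (mul_nonneg hγ0 hγ0),
              mul_nonneg hμ0.le hγ0]
          have hH : 0 ≤ (2 - μ * (1 + γ)) * (q - (μ + γ)) :=
            mul_nonneg (by linarith) (sub_nonneg.2 hQstar)
          nlinarith [hE, hH]
    _ = 2 * X / (μ * (1 + γ)) := by ring
end
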